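/- arXiv:2604.26754 — 3 statements merged into one kernel-verified Lean document; each statement's English description precedes it below -/
import Mathlib

section
/- Failure of (k,ε)-stability for the inner product: Let ε ∈ (0,1) and let m = ⌊1/ε⌋. There exist a finite-dimensional real inner product space H of dimension 2^(m+1) − 2 and vectors x_1,…,x_{2^m}, y_1,…,y_{2^m} in the closed unit ball of H such that ⟪x_i, y_j⟫ − ⟪x_j, y_i⟫ ≥ ε for all 1 ≤ i < j ≤ 2^m. In particular, the inner product on the unit ball is not (k,ε)-stable for k ≤ 2^(⌊1/ε⌋) = exp((log 2)·⌊1/ε⌋). -/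
/-!
Half-graphs for the inner product double under an orthogonal sum. Given `x, y : Fin k → E` with
`⟪x i, y j⟫ - ⟪x j, y i⟫ ≥ 2c²` for `i < j`, place two copies of them on orthogonal copies of `E`
and add two new axes `e₀, e₁`: the left copy becomes `(c e₀ + x i, -c e₁ + y i)`, the right copy
`(c e₁ + x i, c e₀ + y i)`. Pairs inside one copy keep their inner products, while a left `i` and a
right `j` get `⟪x'ᵢ, y'ⱼ⟫ - ⟪x'ⱼ, y'ᵢ⟫ = c² - (-c²) = 2c²`. Each doubling adds `c²` to all squared
norms and sends the dimension `D` to `2D + 2`, so `m` doublings from a point in `ℝ⁰` give `2^m`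
points in dimension `2^(m+1) - 2` with squared norms `m c²`; take `c² = ε / 2` and `m = ⌊1/ε⌋`.
-/

open RealInnerProductSpace

def IsHalfGraph {ι X Y : Type*} [LT ι] (f : X → Y → ℝ) (ε : ℝ) (x : ι → X) (y : ι → Y) : Prop :=
  ∀ i j, i < j → ε ≤ f (x i) (y j) - f (x j) (y i)

namespace IsHalfGraph

variable {ι κ X Y : Type*} {f : X → Y → ℝ} {ε : ℝ} {x : ι → X} {y : ι → Y}

theorem comp_strictMono [Preorder ι] [Preorder κ] (h : IsHalfGraph f ε x y) {e : κ → ι}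
    (he : StrictMono e) : IsHalfGraph f ε (x ∘ e) (y ∘ e) :=
  fun i j hij => h (e i) (e j) (he hij)

theorem comp_linearIsometry {E F : Type*} [NormedAddCommGroup E] [InnerProductSpace ℝ E]
    [NormedAddCommGroup F] [InnerProductSpace ℝ F] [LT ι] {x y : ι → E}
    (h : IsHalfGraph (inner ℝ) ε x y) (L : E →ₗᵢ[ℝ] F) :
    IsHalfGraph (inner ℝ) ε (L ∘ x) (L ∘ y) := by
  intro i j hij
  simpa only [Function.comp_apply, LinearIsometry.inner_map_map] using h i j hij

end IsHalfGraph

section Doubling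

variable {ι : Type*} [Fintype ι]

/-- The vector with coordinates `t` on the two new axes `Sum.inl _` and `v` on the `b`-th of the
two copies `Sum.inr (_, ·)` of `ι`. -/
noncomputable def graft (b : Bool) (t : Bool → ℝ) (v : EuclideanSpace ℝ ι) :
    EuclideanSpace ℝ (Bool ⊕ Bool × ι) :=
  WithLp.toLp 2 (Sum.elim t fun p => if p.1 = b then v p.2 else 0)

theorem inner_graft (b b' : Bool) (s t : Bool → ℝ) (v w : EuclideanSpace ℝ ι) :
    ⟪graft b s v, graft b' t w⟫ =
      s false * t false + s true * t true + if b = b' then ⟪v, w⟫ else 0 := by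
  simp only [graft, PiLp.inner_apply, Fintype.sum_sum_type, Fintype.sum_prod_type, Fintype.sum_bool,
    Sum.elim_inl, Sum.elim_inr]
  cases b <;> cases b' <;> simp [mul_comm, add_comm]

variable {k : ℕ} (c : ℝ)

noncomputable def doubleX (x : Fin k → EuclideanSpace ℝ ι) :
    Fin (k + k) → EuclideanSpace ℝ (Bool ⊕ Bool × ι) :=
  Fin.append (fun i => graft false (fun b => if b then 0 else c) (x i))
    (fun i => graft true (fun b => if b then c else 0) (x i))

noncomputable def doubleY (y : Fin k → EuclideanSpace ℝ ι) :
    Fin (k + k) → EuclideanSpace ℝ (Bool ⊕ Bool × ι) :=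
  Fin.append (fun i => graft false (fun b => if b then -c else 0) (y i))
    (fun i => graft true (fun b => if b then 0 else c) (y i))

variable {c}

theorem norm_sq_graft (b : Bool) (t : Bool → ℝ) (v : EuclideanSpace ℝ ι) :
    ‖graft b t v‖ ^ 2 = t false ^ 2 + t true ^ 2 + ‖v‖ ^ 2 := by
  rw [← real_inner_self_eq_norm_sq, inner_graft, if_pos rfl, real_inner_self_eq_norm_sq]
  ring

theorem norm_sq_doubleX {x : Fin k → EuclideanSpace ℝ ι} {r : ℝ} (hx : ∀ i, ‖x i‖ ^ 2 = r)
    (i : Fin (k + k)) : ‖doubleX c x i‖ ^ 2 = c ^ 2 + r := by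
  cases i using Fin.addCases <;> simp [doubleX, norm_sq_graft, hx, -Fin.natAdd_eq_addNat]

theorem norm_sq_doubleY {y : Fin k → EuclideanSpace ℝ ι} {r : ℝ} (hy : ∀ i, ‖y i‖ ^ 2 = r)
    (i : Fin (k + k)) : ‖doubleY c y i‖ ^ 2 = c ^ 2 + r := by
  cases i using Fin.addCases <;> simp [doubleY, norm_sq_graft, hy, -Fin.natAdd_eq_addNat]

theorem IsHalfGraph.double {x y : Fin k → EuclideanSpace ℝ ι}
    (h : IsHalfGraph (inner ℝ) (2 * c ^ 2) x y) :
    IsHalfGraph (inner ℝ) (2 * c ^ 2) (doubleX c x) (doubleY c y) := by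
  intro i j hij
  cases i using Fin.addCases with
  | left i => cases j using Fin.addCases with
    | left j =>
      simpa [doubleX, doubleY, inner_graft, -Fin.natAdd_eq_addNat]
        using h i j ((Fin.strictMono_castAdd k).lt_iff_lt.mp hij)
    | right j =>
      simp only [doubleX, doubleY, Fin.append_left, Fin.append_right, inner_graft, if_true,
        if_false, Bool.false_eq_true, Bool.true_eq_false]
      linarith [sq c]
  | right i => cases j using Fin.addCases with
    | left j => simp [Fin.lt_def] at hij; omega
    | right j =>
      simpa [doubleX, doubleY, inner_graft, -Fin.natAdd_eq_addNat]
        using h i j ((Fin.natAdd_lt_natAdd_iff k).mp hij)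

end Doubling

theorem exists_isHalfGraph_inner (c : ℝ) (m : ℕ) :
    ∃ x y : Fin (2 ^ m) → EuclideanSpace ℝ (Fin (2 ^ (m + 1) - 2)),
      (∀ i, ‖x i‖ ^ 2 = m * c ^ 2) ∧ (∀ i, ‖y i‖ ^ 2 = m * c ^ 2) ∧
        IsHalfGraph (inner ℝ) (2 * c ^ 2) x y := by
  induction m with
  | zero =>
    refine ⟨0, 0, by simp, by simp, fun i j hij => ?_⟩
    have := j.isLt
    simp only [Fin.lt_def] at hij
    omega
  | succ m ih =>
    obtain ⟨x, y, hx, hy, hxy⟩ := ih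
    have hcard : Fintype.card (Bool ⊕ Bool × Fin (2 ^ (m + 1) - 2)) = 2 ^ (m + 1 + 1) - 2 := by
      simp only [Fintype.card_sum, Fintype.card_prod, Fintype.card_bool, Fintype.card_fin]
      have : 2 ≤ 2 ^ (m + 1) := Nat.le_self_pow (by omega) 2
      rw [pow_succ 2 (m + 1)]
      omega
    let L := LinearIsometryEquiv.piLpCongrLeft 2 ℝ ℝ (Fintype.equivFinOfCardEq hcard)
    let e := Fin.cast (show 2 ^ (m + 1) = 2 ^ m + 2 ^ m by omega)
    refine ⟨L ∘ doubleX c x ∘ e, L ∘ doubleY c y ∘ e, fun i => ?_, fun i => ?_, ?_⟩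
    · simp only [Function.comp_apply, LinearIsometryEquiv.norm_map, norm_sq_doubleX hx]
      push_cast
      ring
    · simp only [Function.comp_apply, LinearIsometryEquiv.norm_map, norm_sq_doubleY hy]
      push_cast
      ring
    · exact (hxy.double.comp_strictMono (Fin.cast_strictMono _)).comp_linearIsometry
        L.toLinearIsometry

/-- Failure of `(2^⌊1/ε⌋, ε)`-stability for the inner product on the unit ball. -/
theorem inner_product_not_stable (ε : ℝ) (hε : ε ∈ Set.Ioo (0 : ℝ) 1) :
    ∃ x y : Fin (2 ^ ⌊1 / ε⌋₊) → EuclideanSpace ℝ (Fin (2 ^ (⌊1 / ε⌋₊ + 1) - 2)),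
      (∀ i, ‖x i‖ ≤ 1) ∧ (∀ i, ‖y i‖ ≤ 1) ∧
      ∀ i j : Fin (2 ^ ⌊1 / ε⌋₊), i < j →
        ε ≤ ⟪x i, y j⟫ - ⟪x j, y i⟫ := by
  have hε0 : 0 < ε := hε.1
  set m := ⌊1 / ε⌋₊
  set c := √(ε / 2)
  have hc : 2 * c ^ 2 = ε := by
    rw [Real.sq_sqrt (by positivity)]
    ring
  have hm : (m : ℝ) * c ^ 2 ≤ 1 := by
    have : (m : ℝ) * ε ≤ 1 := (le_div_iff₀ hε0).mp (Nat.floor_le (by positivity))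
    nlinarith
  have norm_le_one {v : EuclideanSpace ℝ (Fin (2 ^ (m + 1) - 2))} (hv : ‖v‖ ^ 2 = m * c ^ 2) :
      ‖v‖ ≤ 1 :=
    (pow_le_one_iff_of_nonneg (norm_nonneg v) two_ne_zero).mp (hv ▸ hm)
  obtain ⟨x, y, hx, hy, hxy⟩ := exists_isHalfGraph_inner c m
  exact ⟨x, y, fun i => norm_le_one (hx i), fun i => norm_le_one (hy i), hc ▸ hxy⟩
end

section
/- Upper bound for fractional power connectives: Fix β ∈ (0,1] and ε ∈ (0,1), and let H be a real inner product space. Suppose x_1,…,x_n and y_1,…,y_n are vectors in H with ‖x_i‖ ≤ 1 and ‖y_i‖ ≤ 1, such that (max(⟪x_i,y_j⟫,0))^β − (max(⟪x_j,y_i⟫,0))^β ≥ ε for all 1 ≤ i < j ≤ n. Then log n ≤ π·ε^(−1/β) + 1. -/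
/-!
Subadditivity of `t ↦ t ^ β` turns the hypothesis into a linear gap
`⟪x j, y k⟫ - ⟪x k, y j⟫ ≥ δ := ε ^ (1 / β)` for `j < k`. Summing `⟪x j, y k⟫ / (k - j)` over
all pairs and symmetrising, the gap bounds this Hilbert-kernel sum below by `δ (n Hₙ - n)`.
Since `π - t = 2 ∑ₘ sin (m t) / m` on `(0, 2π)`, the same sum is `(2π)⁻¹ ∫ (π - t) F t` with
`F t = ⟪∑ cos (j t) xⱼ, ∑ sin (k t) yₖ⟫ - ⟪∑ sin (j t) xⱼ, ∑ cos (k t) yₖ⟫`, and `|π - t| ≤ π`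
together with Parseval bounds it above by `π n` (Hilbert's inequality). Hence
`log n ≤ Hₙ ≤ π / δ + 1`.
-/

open Real RealInnerProductSpace

lemma rpow_sub_rpow_le_rpow_sub {a b β : ℝ} (hb : 0 ≤ b) (hba : b ≤ a) (hβ0 : 0 ≤ β)
    (hβ1 : β ≤ 1) : a ^ β - b ^ β ≤ (a - b) ^ β := by
  lift b to NNReal using hb
  lift a to NNReal using (b.2.trans hba)
  have h := NNReal.rpow_add_le_add_rpow (a - b) b hβ0 hβ1
  rw [tsub_add_cancel_of_le (by exact_mod_cast hba)] at h
  have h' := NNReal.coe_le_coe.2 h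
  push_cast [NNReal.coe_sub (show b ≤ a by exact_mod_cast hba)] at h'
  linarith

lemma le_sub_of_le_rpow_max_sub_rpow_max {β ε P Q : ℝ} (hβ0 : 0 < β) (hβ1 : β ≤ 1) (hε : 0 < ε)
    (h : ε ≤ max P 0 ^ β - max Q 0 ^ β) : ε ^ (1 / β) ≤ P - Q := by
  have hlt : max Q 0 < max P 0 := by
    by_contra! hle
    linarith [rpow_le_rpow (le_max_right P 0) hle hβ0.le]
  have hP : max P 0 = P := max_eq_left (lt_max_iff.1 ((le_max_right Q 0).trans_lt hlt)
    |>.resolve_right (lt_irrefl 0)).le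
  have hgap : ε ≤ (max P 0 - max Q 0) ^ β :=
    h.trans (rpow_sub_rpow_le_rpow_sub (le_max_right Q 0) hlt.le hβ0.le hβ1)
  calc ε ^ (1 / β) ≤ max P 0 - max Q 0 := by
        rw [one_div, rpow_inv_le_iff_of_pos hε.le (sub_nonneg.2 hlt.le) hβ0]; exact hgap
    _ ≤ P - Q := by rw [hP]; linarith [le_max_left Q 0]

lemma sum_range_inv_abs_sub (n : ℕ) :
    ∑ j ∈ Finset.range n, 1 / |(n : ℝ) - j| = harmonic n := by
  rw [← Finset.sum_range_reflect, harmonic]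
  push_cast
  refine Finset.sum_congr rfl fun j hj => ?_
  have hjn : j < n := Finset.mem_range.1 hj
  rw [Nat.cast_sub (by omega), Nat.cast_sub (by omega), abs_of_pos (by push_cast; linarith)]
  push_cast
  ring

lemma sum_range_sum_range_inv_abs_sub (n : ℕ) :
    ∑ j ∈ Finset.range n, ∑ k ∈ Finset.range n, 1 / |(k : ℝ) - j| = 2 * (n * harmonic n - n) := by
  induction n with
  | zero => simp
  | succ n ih =>
    have hrow := sum_range_inv_abs_sub n
    have hcol : ∑ k ∈ Finset.range n, 1 / |(k : ℝ) - n| = harmonic n := by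
      simpa only [abs_sub_comm] using hrow
    simp only [Finset.sum_range_succ, Finset.sum_add_distrib, ih, hrow, hcol, sub_self, abs_zero,
      div_zero, add_zero, harmonic_succ]
    push_cast
    field_simp
    ring

lemma integral_cos_int_mul {m : ℤ} (hm : m ≠ 0) : ∫ t in (0)..(2 * π), cos (m * t) = 0 := by
  rw [intervalIntegral.integral_comp_mul_left (fun t => cos t) (Int.cast_ne_zero.2 hm),
    integral_cos, ← mul_assoc, mul_comm (m : ℝ) 2]
  simpa using Or.inr (sin_int_mul_pi (2 * m))

-- At `m = 0` the right-hand side is the junk value `2 * π / 0 = 0`, matching the integral.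
lemma integral_pi_sub_mul_sin_int_mul (m : ℤ) :
    ∫ t in (0)..(2 * π), (π - t) * sin (m * t) = 2 * π / m := by
  rcases eq_or_ne m 0 with rfl | hm
  · simp
  have hm' : (m : ℝ) ≠ 0 := Int.cast_ne_zero.2 hm
  have hderiv (t : ℝ) : HasDerivAt (fun t => -((π - t) * cos (m * t)) / m - sin (m * t) / m ^ 2)
      ((π - t) * sin (m * t)) t := by
    have hmt : HasDerivAt (fun t : ℝ => (m : ℝ) * t) m t := by
      simpa using (hasDerivAt_id t).const_mul (m : ℝ)
    have := ((((hasDerivAt_id t).const_sub π).mul (hmt.cos)).neg.div_const (m : ℝ)).sub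
      (hmt.sin.div_const ((m : ℝ) ^ 2))
    refine this.congr_deriv ?_
    simp only [id]
    field_simp
    ring
  rw [intervalIntegral.integral_eq_sub_of_hasDerivAt (fun t _ => hderiv t)
    (by apply Continuous.intervalIntegrable; fun_prop)]
  have hsin : sin (m * (2 * π)) = 0 := by
    rw [← mul_assoc, mul_comm (m : ℝ) 2]; exact_mod_cast sin_int_mul_pi (2 * m)
  simp only [cos_int_mul_two_pi, hsin, mul_zero, cos_zero, sin_zero]
  field_simp
  ring

lemma intervalIntegral.integral_finsetSum_finsetSum {ι : Type*} (s : Finset ι) {g : ι → ι → ℝ → ℝ}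
    (hg : ∀ j k, Continuous (g j k)) (a b : ℝ) :
    ∫ t in a..b, ∑ j ∈ s, ∑ k ∈ s, g j k t = ∑ j ∈ s, ∑ k ∈ s, ∫ t in a..b, g j k t := by
  rw [intervalIntegral.integral_finsetSum fun j _ =>
    (continuous_finsetSum _ fun k _ => hg j k).intervalIntegrable a b]
  exact Finset.sum_congr rfl fun j _ => intervalIntegral.integral_finsetSum fun k _ =>
    (hg j k).intervalIntegrable a b

section HilbertInequality

variable {H : Type*} [NormedAddCommGroup H] [InnerProductSpace ℝ H] {n : ℕ}

lemma div_abs_sub_le_add_div_sub {δ : ℝ} {a : Fin n → Fin n → ℝ}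
    (hgap : ∀ j k, j < k → δ ≤ a j k - a k j) (j k : Fin n) :
    δ / |(k : ℝ) - j| ≤ a j k / ((k : ℝ) - j) + a k j / ((j : ℝ) - k) := by
  rcases lt_trichotomy j k with hjk | rfl | hkj
  · have hpos : 0 < (k : ℝ) - j := sub_pos.2 (by exact_mod_cast hjk)
    rw [abs_of_pos hpos, ← neg_sub (k : ℝ), div_neg, ← sub_eq_add_neg, ← sub_div]
    exact div_le_div_of_nonneg_right (hgap j k hjk) hpos.le
  · simp
  · have hpos : 0 < (j : ℝ) - k := sub_pos.2 (by exact_mod_cast hkj)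
    rw [abs_sub_comm, abs_of_pos hpos, ← neg_sub (j : ℝ), div_neg, neg_add_eq_sub, ← sub_div]
    exact div_le_div_of_nonneg_right (hgap k j hkj) hpos.le

theorem mul_harmonic_le_sum_div_sub {δ : ℝ} (a : Fin n → Fin n → ℝ)
    (hgap : ∀ j k, j < k → δ ≤ a j k - a k j) :
    δ * (n * harmonic n - n) ≤ ∑ j, ∑ k, a j k / ((k : ℝ) - j) := by
  have hsymm : ∑ j, ∑ k, (a j k / ((k : ℝ) - j) + a k j / ((j : ℝ) - k)) =
      2 * ∑ j, ∑ k, a j k / ((k : ℝ) - j) := by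
    simp only [Finset.sum_add_distrib]
    rw [Finset.sum_comm (f := fun j k => a k j / ((j : ℝ) - k))]
    ring
  have hcount : ∑ j : Fin n, ∑ k : Fin n, 1 / |(k : ℝ) - j| = 2 * (n * harmonic n - n) := by
    rw [← sum_range_sum_range_inv_abs_sub, Fin.sum_univ_eq_sum_range
      (fun j => ∑ k : Fin n, 1 / |(k : ℝ) - j|)]
    exact Finset.sum_congr rfl fun j _ =>
      Fin.sum_univ_eq_sum_range (fun k => 1 / |(k : ℝ) - j|) n
  have hsum := Finset.sum_le_sum fun j (_ : j ∈ Finset.univ) =>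
    Finset.sum_le_sum fun k (_ : k ∈ Finset.univ) => div_abs_sub_le_add_div_sub hgap j k
  simp only [div_eq_mul_one_div δ, ← Finset.mul_sum, hcount, hsymm] at hsum
  linarith

noncomputable def cosSum (z : Fin n → H) (t : ℝ) : H := ∑ j : Fin n, cos ((j : ℝ) * t) • z j

noncomputable def sinSum (z : Fin n → H) (t : ℝ) : H := ∑ j : Fin n, sin ((j : ℝ) * t) • z j

@[fun_prop]
lemma continuous_cosSum (z : Fin n → H) : Continuous (cosSum z) := by
  unfold cosSum; fun_prop

@[fun_prop]
lemma continuous_sinSum (z : Fin n → H) : Continuous (sinSum z) := by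
  unfold sinSum; fun_prop

lemma norm_cosSum_sq_add_norm_sinSum_sq (z : Fin n → H) (t : ℝ) :
    ‖cosSum z t‖ ^ 2 + ‖sinSum z t‖ ^ 2 =
      ∑ j, ∑ k, ⟪z j, z k⟫ * cos (((j : ℝ) - k) * t) := by
  simp only [cosSum, sinSum, ← real_inner_self_eq_norm_sq, sum_inner]
  simp only [inner_sum, real_inner_smul_left, real_inner_smul_right, ← Finset.sum_add_distrib]
  refine Finset.sum_congr rfl fun j _ => Finset.sum_congr rfl fun k _ => ?_
  rw [sub_mul, cos_sub]
  ring

lemma integral_norm_cosSum_sq_add_norm_sinSum_sq (z : Fin n → H) :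
    ∫ t in (0)..(2 * π), (‖cosSum z t‖ ^ 2 + ‖sinSum z t‖ ^ 2) = 2 * π * ∑ j, ‖z j‖ ^ 2 := by
  simp_rw [norm_cosSum_sq_add_norm_sinSum_sq]
  rw [intervalIntegral.integral_finsetSum_finsetSum _ (fun j k => by fun_prop), Finset.mul_sum]
  refine Finset.sum_congr rfl fun j _ => ?_
  rw [Finset.sum_eq_single j]
  · simp [mul_comm]
  · intro k _ hkj
    have hjk : ((j : ℤ) - k : ℤ) ≠ 0 :=
      sub_ne_zero.2 fun h => hkj (Fin.ext (by exact_mod_cast h.symm))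
    have hcos := integral_cos_int_mul hjk
    push_cast at hcos
    rw [intervalIntegral.integral_const_mul, hcos, mul_zero]
  · simp

lemma inner_cosSum_sinSum_sub_inner_sinSum_cosSum (x y : Fin n → H) (t : ℝ) :
    ⟪cosSum x t, sinSum y t⟫ - ⟪sinSum x t, cosSum y t⟫ =
      ∑ j, ∑ k, ⟪x j, y k⟫ * sin (((k : ℝ) - j) * t) := by
  simp only [cosSum, sinSum, sum_inner]
  simp only [inner_sum, real_inner_smul_left, real_inner_smul_right, ← Finset.sum_sub_distrib]
  refine Finset.sum_congr rfl fun j _ => Finset.sum_congr rfl fun k _ => ?_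
  rw [sub_mul, sin_sub]
  ring

lemma integral_pi_sub_mul_inner_cosSum_sinSum_sub (x y : Fin n → H) :
    ∫ t in (0)..(2 * π), (π - t) * (⟪cosSum x t, sinSum y t⟫ - ⟪sinSum x t, cosSum y t⟫) =
      2 * π * ∑ j, ∑ k, ⟪x j, y k⟫ / ((k : ℝ) - j) := by
  simp_rw [inner_cosSum_sinSum_sub_inner_sinSum_cosSum, Finset.mul_sum]
  rw [intervalIntegral.integral_finsetSum_finsetSum _ (fun j k => by fun_prop)]
  refine Finset.sum_congr rfl fun j _ => Finset.sum_congr rfl fun k _ => ?_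
  simp_rw [mul_left_comm (π - _), intervalIntegral.integral_const_mul]
  have := integral_pi_sub_mul_sin_int_mul ((k : ℤ) - j)
  push_cast at this
  rw [this]
  ring

lemma abs_inner_sub_inner_le (a b c d : H) :
    |⟪a, d⟫ - ⟪b, c⟫| ≤ (‖a‖ ^ 2 + ‖b‖ ^ 2 + ‖c‖ ^ 2 + ‖d‖ ^ 2) / 2 := by
  have had := abs_real_inner_le_norm a d
  have hbc := abs_real_inner_le_norm b c
  nlinarith [abs_sub (⟪a, d⟫) (⟪b, c⟫), sq_nonneg (‖a‖ - ‖d‖), sq_nonneg (‖b‖ - ‖c‖)]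

-- Hilbert's inequality for vectors; the diagonal terms vanish because `x / 0 = 0`.
theorem sum_inner_div_sub_le (x y : Fin n → H) :
    ∑ j, ∑ k, ⟪x j, y k⟫ / ((k : ℝ) - j) ≤ π / 2 * (∑ j, ‖x j‖ ^ 2 + ∑ j, ‖y j‖ ^ 2) := by
  have hpointwise : ∀ t ∈ Set.Icc 0 (2 * π),
      (π - t) * (⟪cosSum x t, sinSum y t⟫ - ⟪sinSum x t, cosSum y t⟫) ≤
        π / 2 * ((‖cosSum x t‖ ^ 2 + ‖sinSum x t‖ ^ 2) + (‖cosSum y t‖ ^ 2 + ‖sinSum y t‖ ^ 2)) := by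
    rintro t ⟨ht0, ht2π⟩
    have hπt : |π - t| ≤ π := abs_le.2 ⟨by linarith, by linarith⟩
    calc _ ≤ |π - t| * |⟪cosSum x t, sinSum y t⟫ - ⟪sinSum x t, cosSum y t⟫| :=
          (le_abs_self _).trans (abs_mul _ _).le
      _ ≤ π * ((‖cosSum x t‖ ^ 2 + ‖sinSum x t‖ ^ 2 + ‖cosSum y t‖ ^ 2 + ‖sinSum y t‖ ^ 2)
            / 2) :=
          mul_le_mul hπt (abs_inner_sub_inner_le _ _ _ _) (abs_nonneg _) pi_pos.le
      _ = _ := by ring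
  have hintegral : 2 * π * ∑ j, ∑ k, ⟪x j, y k⟫ / ((k : ℝ) - j) ≤
      2 * π * (π / 2 * (∑ j, ‖x j‖ ^ 2 + ∑ j, ‖y j‖ ^ 2)) := calc
    _ = ∫ t in (0)..(2 * π), (π - t) * (⟪cosSum x t, sinSum y t⟫ - ⟪sinSum x t, cosSum y t⟫) :=
        (integral_pi_sub_mul_inner_cosSum_sinSum_sub x y).symm
    _ ≤ ∫ t in (0)..(2 * π), π / 2 *
          ((‖cosSum x t‖ ^ 2 + ‖sinSum x t‖ ^ 2) + (‖cosSum y t‖ ^ 2 + ‖sinSum y t‖ ^ 2)) :=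
        intervalIntegral.integral_mono_on (by positivity)
          (Continuous.intervalIntegrable (by fun_prop) _ _)
          (Continuous.intervalIntegrable (by fun_prop) _ _) hpointwise
    _ = _ := by
        rw [intervalIntegral.integral_const_mul,
          intervalIntegral.integral_add (Continuous.intervalIntegrable (by fun_prop) _ _)
            (Continuous.intervalIntegrable (by fun_prop) _ _),
          integral_norm_cosSum_sq_add_norm_sinSum_sq, integral_norm_cosSum_sq_add_norm_sinSum_sq]
        ring
  exact le_of_mul_le_mul_left hintegral (by positivity)

theorem harmonic_le_of_le_inner_sub_inner {δ : ℝ} (hδ : 0 < δ) (x y : Fin n → H)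
    (hx : ∀ i, ‖x i‖ ≤ 1) (hy : ∀ i, ‖y i‖ ≤ 1)
    (hgap : ∀ j k, j < k → δ ≤ ⟪x j, y k⟫ - ⟪x k, y j⟫) :
    (harmonic n : ℝ) ≤ π / δ + 1 := by
  have hsq {z : Fin n → H} (hz : ∀ i, ‖z i‖ ≤ 1) : ∑ i, ‖z i‖ ^ 2 ≤ n := by
    simpa using Finset.sum_le_card_nsmul Finset.univ (fun i => ‖z i‖ ^ 2) 1
      fun i _ => pow_le_one₀ (norm_nonneg _) (hz i)
  have hbound : δ * (n * harmonic n - n) ≤ π * n := calc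
    _ ≤ ∑ j, ∑ k, ⟪x j, y k⟫ / ((k : ℝ) - j) := mul_harmonic_le_sum_div_sub _ hgap
    _ ≤ π / 2 * (∑ j, ‖x j‖ ^ 2 + ∑ j, ‖y j‖ ^ 2) := sum_inner_div_sub_le x y
    _ ≤ π / 2 * (n + n) := by gcongr <;> exact hsq ‹_›
    _ = π * n := by ring
  rcases n.eq_zero_or_pos with rfl | hn
  · simp only [harmonic_zero, Rat.cast_zero]
    positivity
  rw [← sub_le_iff_le_add, le_div_iff₀ hδ]
  have hn' : (0 : ℝ) < n := by exact_mod_cast hn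
  nlinarith

end HilbertInequality

/-- Upper bound for fractional power connectives `(⟪x,y⟫₊)^β`, `β ∈ (0,1]`. -/
theorem fractional_power_upper_bound
    {H : Type*} [NormedAddCommGroup H] [InnerProductSpace ℝ H]
    (β : ℝ) (hβ : β ∈ Set.Ioc (0 : ℝ) 1)
    (ε : ℝ) (hε : ε ∈ Set.Ioo (0 : ℝ) 1) (n : ℕ)
    (x y : Fin n → H)
    (hx : ∀ i, ‖x i‖ ≤ 1) (hy : ∀ i, ‖y i‖ ≤ 1)
    (hhg : ∀ i j : Fin n, i < j →
        ε ≤ (max ⟪x i, y j⟫ 0) ^ β - (max ⟪x j, y i⟫ 0) ^ β) :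
    Real.log n ≤ π * ε ^ (-(1 / β)) + 1 := by
  obtain ⟨hβ0, hβ1⟩ := hβ
  have hδ : 0 < ε ^ (1 / β) := rpow_pos_of_pos hε.1 _
  have hharmonic := harmonic_le_of_le_inner_sub_inner hδ x y hx hy fun j k hjk =>
    le_sub_of_le_rpow_max_sub_rpow_max hβ0 hβ1 hε.1 (hhg j k hjk)
  calc Real.log n ≤ harmonic n := by simpa using log_le_harmonic_floor n n.cast_nonneg
    _ ≤ π / ε ^ (1 / β) + 1 := hharmonic
    _ = π * ε ^ (-(1 / β)) + 1 := by rw [rpow_neg hε.1.le, div_eq_mul_inv]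
end

section
/- Upper bound for power connectives with exponent α ≥ 1: Fix a real number α ≥ 1 and ε ∈ (0,1), and let H be a real inner product space. Suppose x_1,…,x_n and y_1,…,y_n are vectors in H with ‖x_i‖ ≤ 1 and ‖y_i‖ ≤ 1, such that (max(⟪x_i,y_j⟫,0))^α − (max(⟪x_j,y_i⟫,0))^α ≥ ε for all 1 ≤ i < j ≤ n. Then log n ≤ α·π/ε + 1. -/
/-!
For `α ≥ 1` the map `t ↦ (t₊)^α` is monotone and `α`-Lipschitz on `(-∞, 1]`, so the hypothesis
gives the bilinear half-graph condition `⟪x j, y k⟫ - ⟪x k, y j⟫ ≥ ε / α` for `j < k`.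

For such a configuration put `u(t) = ∑ₖ (cos(kt) xₖ + sin(kt) yₖ)` and
`v(t) = ∑ₖ (sin(kt) xₖ - cos(kt) yₖ)`, and integrate `t (‖u(t)‖² + ‖v(t)‖²) ≥ 0` over `[0, 2π]`.
The diagonal terms contribute at most `4π²n`, while `∫₀^{2π} t sin(mt) dt = -2π/m` makes the
off-diagonal terms contribute `-2π ∑_{j ≠ k} (⟪x j, y k⟫ - ⟪x k, y j⟫)/(k - j)
≤ -4π (ε/α) ∑_{j < k} 1/(k - j) ≤ -4π (ε/α) (n log n - n)`, the last step because
`∑_{k < n} H_k = n H_n - n` and `H_n ≥ log n`.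
-/

open RealInnerProductSpace Real Finset

theorem rpow_sub_rpow_le_mul_sub {α a b : ℝ} (hα : 1 ≤ α) (ha : 0 ≤ a) (hab : a ≤ b)
    (hb : b ≤ 1) : b ^ α - a ^ α ≤ α * (b - a) := by
  refine (convex_Icc (0 : ℝ) 1).image_sub_le_mul_sub_of_deriv_le
    (fun t _ => (continuousAt_rpow_const _ _ (Or.inr (by linarith))).continuousWithinAt)
    (fun t ht => ?_) (fun t ht => ?_) a ⟨ha, hab.trans hb⟩ b ⟨ha.trans hab, hb⟩ hab
  · rw [interior_Icc] at ht
    exact (differentiableAt_rpow_const_of_ne _ ht.1.ne').differentiableWithinAt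
  · rw [interior_Icc] at ht
    rw [Real.deriv_rpow_const]
    have : t ^ (α - 1) ≤ 1 := rpow_le_one ht.1.le ht.2.le (by linarith)
    nlinarith

theorem le_mul_sub_of_le_max_rpow_sub_max_rpow {α a b ε : ℝ} (hα : 1 ≤ α) (hb : b ≤ 1)
    (hε : 0 < ε) (h : ε ≤ max b 0 ^ α - max a 0 ^ α) : ε ≤ α * (b - a) := by
  have hlt : max a 0 < max b 0 := by
    by_contra! hle
    linarith [rpow_le_rpow (le_max_right b 0) hle (by linarith : 0 ≤ α)]
  have hb0 : max b 0 = b := max_eq_left (by by_contra! hb0; simp [hb0.le] at hlt)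
  rw [hb0] at hlt h
  calc ε ≤ b ^ α - max a 0 ^ α := h
    _ ≤ α * (b - max a 0) := rpow_sub_rpow_le_mul_sub hα (le_max_right a 0) hlt.le hb
    _ ≤ α * (b - a) := by gcongr; exact le_max_left a 0

theorem integral_mul_mul_cos_add_mul_sin_of_ne_zero {m : ℤ} (hm : m ≠ 0) (a b : ℝ) :
    ∫ t in (0)..(2 * π), t * (a * cos (m * t) + b * sin (m * t)) = -(2 * π * (b / m)) := by
  have hm' : (m : ℝ) ≠ 0 := Int.cast_ne_zero.mpr hm
  have hderiv : ∀ t ∈ Set.uIcc 0 (2 * π), HasDerivAt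
      (fun t => a * (t * sin (m * t) / m + cos (m * t) / m ^ 2)
        + b * (sin (m * t) / m ^ 2 - t * cos (m * t) / m))
      (t * (a * cos (m * t) + b * sin (m * t))) t := by
    intro t _
    have hmt : HasDerivAt (fun t : ℝ => (m : ℝ) * t) m t := by
      simpa using (hasDerivAt_id t).const_mul (m : ℝ)
    have hs := (hasDerivAt_sin _).comp t hmt
    have hc := (hasDerivAt_cos _).comp t hmt
    refine ((((((hasDerivAt_id' t).mul hs).div_const (m : ℝ)).add
      (hc.div_const ((m : ℝ) ^ 2))).const_mul a).add (((hs.div_const ((m : ℝ) ^ 2)).sub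
        (((hasDerivAt_id' t).mul hc).div_const (m : ℝ))).const_mul b)).congr_deriv ?_
    simp only [Function.comp_apply]
    field_simp
    ring
  rw [intervalIntegral.integral_eq_sub_of_hasDerivAt hderiv
    (Continuous.intervalIntegrable (by fun_prop) _ _)]
  have hsin : sin (m * (2 * π)) = 0 := by
    rw [show (m : ℝ) * (2 * π) = (2 * m : ℤ) * π by push_cast; ring, sin_int_mul_pi]
  have hcos : cos (m * (2 * π)) = 1 := cos_int_mul_two_pi m
  simp only [hsin, hcos, mul_zero, sin_zero, cos_zero]
  field_simp
  ring

/- For `j = k` the term `B j j / 0` is `0` by Lean's convention, so the diagonal of `B` does not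
contribute. -/
theorem integral_mul_sum_sum_mul_cos_add_mul_sin {n : ℕ} (A B : Fin n → Fin n → ℝ) :
    ∫ t in (0)..(2 * π), t * ∑ j, ∑ k,
        (A j k * cos ((k : ℕ) * t - (j : ℕ) * t) + B j k * sin ((k : ℕ) * t - (j : ℕ) * t))
      = 2 * π ^ 2 * ∑ j, A j j - 2 * π * ∑ j, ∑ k, B j k / ((k : ℕ) - (j : ℕ) : ℝ) := by
  have hterm : ∀ j k : Fin n, ∫ t in (0)..(2 * π),
      t * (A j k * cos ((k : ℕ) * t - (j : ℕ) * t) + B j k * sin ((k : ℕ) * t - (j : ℕ) * t))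
      = (if j = k then 2 * π ^ 2 * A j k else 0)
          - 2 * π * (B j k / ((k : ℕ) - (j : ℕ) : ℝ)) := by
    intro j k
    by_cases hjk : j = k
    · subst hjk
      simp only [sub_self, cos_zero, sin_zero, mul_one, mul_zero, add_zero, div_zero, if_true,
        intervalIntegral.integral_mul_const, integral_id]
      ring
    · have hm : ((k : ℕ) - (j : ℕ) : ℤ) ≠ 0 :=
        sub_ne_zero.mpr (by exact_mod_cast Fin.val_ne_of_ne (Ne.symm hjk))
      have hphase : ∀ t : ℝ, (k : ℕ) * t - (j : ℕ) * t = (((k : ℕ) - (j : ℕ) : ℤ) : ℝ) * t := by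
        intro t; push_cast; ring
      simp only [hphase, integral_mul_mul_cos_add_mul_sin_of_ne_zero hm, if_neg hjk]
      push_cast
      ring
  simp only [mul_sum]
  rw [intervalIntegral.integral_finsetSum fun j _ =>
    (by fun_prop : Continuous _).intervalIntegrable _ _]
  rw [sum_congr rfl fun j _ => intervalIntegral.integral_finsetSum fun k _ =>
    (by fun_prop : Continuous _).intervalIntegrable _ _]
  simp only [hterm, sum_sub_distrib, sum_ite_eq, mem_univ, if_true]

theorem sum_range_harmonic (n : ℕ) : ∑ k ∈ range n, harmonic k = n * harmonic n - n := by
  induction n with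
  | zero => simp
  | succ n ih =>
    rw [sum_range_succ, ih, harmonic_succ]
    push_cast
    field_simp
    ring

theorem sum_range_inv_sub_eq_harmonic (k : ℕ) :
    ∑ j ∈ range k, ((k : ℝ) - j)⁻¹ = harmonic k := by
  rw [harmonic, ← sum_range_reflect]
  push_cast
  refine sum_congr rfl fun j hj => ?_
  rw [Nat.cast_sub (by simp at hj; omega), Nat.cast_sub (by simp at hj; omega)]
  push_cast
  ring_nf

noncomputable def upperInvGap {n : ℕ} (j k : Fin n) : ℝ :=
  if j < k then ((k : ℕ) - (j : ℕ) : ℝ)⁻¹ else 0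

theorem sum_sum_upperInvGap_eq_sum_harmonic (n : ℕ) :
    ∑ j : Fin n, ∑ k : Fin n, upperInvGap j k = ∑ k ∈ range n, (harmonic k : ℝ) := by
  rw [sum_comm, ← Fin.sum_univ_eq_sum_range (fun k => (harmonic k : ℝ))]
  refine sum_congr rfl fun k _ => ?_
  simp only [upperInvGap, Fin.lt_def]
  rw [← sum_range_inv_sub_eq_harmonic,
    Fin.sum_univ_eq_sum_range (fun j => if j < (k : ℕ) then ((k : ℕ) - j : ℝ)⁻¹ else 0),
    ← sum_filter]
  congr 1
  ext j
  simp only [mem_filter, mem_range]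
  omega

theorem mul_log_sub_le_sum_sum_upperInvGap (n : ℕ) :
    n * log n - n ≤ ∑ j : Fin n, ∑ k : Fin n, upperInvGap j k := by
  rw [sum_sum_upperInvGap_eq_sum_harmonic, ← Rat.cast_sum, sum_range_harmonic]
  push_cast
  rcases n.eq_zero_or_pos with rfl | hn
  · simp
  gcongr
  exact (log_le_log (by positivity) (by push_cast; linarith)).trans (log_add_one_le_harmonic n)

section InnerProductSpace

variable {H : Type*} [NormedAddCommGroup H] [InnerProductSpace ℝ H]

theorem norm_sq_add_norm_sq_eq_sum_sum_cos_add_sin {ι : Type*} [Fintype ι] (θ : ι → ℝ)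
    (x y : ι → H) :
    ‖∑ k, (cos (θ k) • x k + sin (θ k) • y k)‖ ^ 2
      + ‖∑ k, (sin (θ k) • x k - cos (θ k) • y k)‖ ^ 2
      = ∑ j, ∑ k, ((⟪x j, x k⟫ + ⟪y j, y k⟫) * cos (θ k - θ j)
          + (⟪x j, y k⟫ - ⟪y j, x k⟫) * sin (θ k - θ j)) := by
  simp only [← real_inner_self_eq_norm_sq, sum_inner, inner_sum, ← sum_add_distrib]
  refine sum_congr rfl fun j _ => sum_congr rfl fun k _ => ?_
  simp only [inner_add_left, inner_add_right, inner_sub_left, inner_sub_right,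
    real_inner_smul_left, real_inner_smul_right, cos_sub, sin_sub]
  rw [real_inner_comm (x j) (x k), real_inner_comm (y j) (y k), real_inner_comm (x j) (y k),
    real_inner_comm (y j) (x k)]
  ring

theorem sum_sum_inner_sub_inner_div_le {n : ℕ} (x y : Fin n → H) :
    ∑ j, ∑ k, (⟪x j, y k⟫ - ⟪y j, x k⟫) / ((k : ℕ) - (j : ℕ) : ℝ)
      ≤ π * ∑ j, (‖x j‖ ^ 2 + ‖y j‖ ^ 2) := by
  have hnonneg := intervalIntegral.integral_nonneg (μ := MeasureTheory.volume)
    (f := fun t => t * (‖∑ k : Fin n, (cos ((k : ℕ) * t) • x k + sin ((k : ℕ) * t) • y k)‖ ^ 2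
      + ‖∑ k : Fin n, (sin ((k : ℕ) * t) • x k - cos ((k : ℕ) * t) • y k)‖ ^ 2))
    (by positivity : (0 : ℝ) ≤ 2 * π) fun t ht => mul_nonneg ht.1 (by positivity)
  simp only [norm_sq_add_norm_sq_eq_sum_sum_cos_add_sin (fun k : Fin n => ((k : ℕ) : ℝ) * _),
    integral_mul_sum_sum_mul_cos_add_mul_sin, real_inner_self_eq_norm_sq] at hnonneg
  refine le_of_mul_le_mul_left ?_ (by positivity : (0 : ℝ) < 2 * π)
  linarith

theorem mul_upperInvGap_add_upperInvGap_le {δ : ℝ} {n : ℕ} {x y : Fin n → H}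
    (hxy : ∀ j k : Fin n, j < k → δ ≤ ⟪x j, y k⟫ - ⟪x k, y j⟫) (j k : Fin n) :
    δ * (upperInvGap j k + upperInvGap k j)
      ≤ (⟪x j, y k⟫ - ⟪y j, x k⟫) / ((k : ℕ) - (j : ℕ) : ℝ) := by
  rw [real_inner_comm (x k) (y j)]
  rcases lt_trichotomy j k with hjk | rfl | hkj
  · have hpos : (0 : ℝ) < (k : ℕ) - (j : ℕ) := sub_pos.mpr (by exact_mod_cast hjk)
    simp only [upperInvGap, if_pos hjk, if_neg hjk.not_gt, add_zero, ← div_eq_mul_inv]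
    exact div_le_div_of_nonneg_right (hxy j k hjk) hpos.le
  · simp [upperInvGap]
  · have hpos : (0 : ℝ) < (j : ℕ) - (k : ℕ) := sub_pos.mpr (by exact_mod_cast hkj)
    simp only [upperInvGap, if_pos hkj, if_neg hkj.not_gt, zero_add, ← div_eq_mul_inv]
    rw [← neg_div_neg_eq (⟪x j, y k⟫ - ⟪x k, y j⟫), neg_sub, neg_sub]
    exact div_le_div_of_nonneg_right (hxy k j hkj) hpos.le

theorem log_le_pi_div_add_one_of_le_inner_sub_inner {δ : ℝ} (hδ : 0 < δ) {n : ℕ}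
    (x y : Fin n → H) (hx : ∀ i, ‖x i‖ ≤ 1) (hy : ∀ i, ‖y i‖ ≤ 1)
    (hxy : ∀ j k : Fin n, j < k → δ ≤ ⟪x j, y k⟫ - ⟪x k, y j⟫) :
    log n ≤ π / δ + 1 := by
  rcases n.eq_zero_or_pos with rfl | hn
  · simp only [CharP.cast_eq_zero, log_zero]
    positivity
  have hlower : 2 * δ * (n * log n - n)
      ≤ ∑ j, ∑ k, (⟪x j, y k⟫ - ⟪y j, x k⟫) / ((k : ℕ) - (j : ℕ) : ℝ) :=
    calc 2 * δ * (n * log n - n) ≤ 2 * δ * ∑ j, ∑ k, upperInvGap j k := by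
          gcongr; exact mul_log_sub_le_sum_sum_upperInvGap n
      _ = ∑ j, ∑ k, δ * (upperInvGap j k + upperInvGap k j) := by
          simp only [mul_add, sum_add_distrib, ← mul_sum]
          rw [sum_comm (f := fun j k => upperInvGap k j)]
          ring
      _ ≤ _ := sum_le_sum fun j _ => sum_le_sum fun k _ =>
          mul_upperInvGap_add_upperInvGap_le hxy j k
  have hnorm : ∑ j, (‖x j‖ ^ 2 + ‖y j‖ ^ 2) ≤ 2 * n :=
    calc ∑ j, (‖x j‖ ^ 2 + ‖y j‖ ^ 2) ≤ ∑ _j : Fin n, (1 + 1 : ℝ) := by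
          gcongr with j
          · exact pow_le_one₀ (norm_nonneg _) (hx j)
          · exact pow_le_one₀ (norm_nonneg _) (hy j)
      _ = 2 * n := by simp; ring
  have hmain : δ * (log n - 1) * n ≤ π * n := by
    have := (hlower.trans (sum_sum_inner_sub_inner_div_le x y)).trans
      (mul_le_mul_of_nonneg_left hnorm pi_pos.le)
    linarith
  have := le_of_mul_le_mul_right hmain (by exact_mod_cast hn)
  rw [div_add_one hδ.ne', le_div_iff₀ hδ]
  linarith

end InnerProductSpace

/-- Upper bound for power connectives `(⟪x,y⟫₊)^α` with `α ≥ 1`. -/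
theorem power_upper_bound_alpha_ge_one
    {H : Type*} [NormedAddCommGroup H] [InnerProductSpace ℝ H]
    (α : ℝ) (hα : 1 ≤ α)
    (ε : ℝ) (hε : ε ∈ Set.Ioo (0 : ℝ) 1) (n : ℕ)
    (x y : Fin n → H)
    (hx : ∀ i, ‖x i‖ ≤ 1) (hy : ∀ i, ‖y i‖ ≤ 1)
    (hhg : ∀ i j : Fin n, i < j →
        ε ≤ (max ⟪x i, y j⟫ 0) ^ α - (max ⟪x j, y i⟫ 0) ^ α) :
    Real.log n ≤ α * π / ε + 1 := by
  have hε0 : 0 < ε := hε.1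
  have hα0 : 0 < α := by linarith
  have hmargin : ∀ j k : Fin n, j < k → ε / α ≤ ⟪x j, y k⟫ - ⟪x k, y j⟫ := by
    intro j k hjk
    have hinner : ⟪x j, y k⟫ ≤ 1 :=
      (real_inner_le_norm _ _).trans (mul_le_one₀ (hx j) (norm_nonneg _) (hy k))
    rw [div_le_iff₀' hα0]
    exact le_mul_sub_of_le_max_rpow_sub_max_rpow hα hinner hε0 (hhg j k hjk)
  calc Real.log n ≤ π / (ε / α) + 1 :=
        log_le_pi_div_add_one_of_le_inner_sub_inner (div_pos hε0 hα0) x y hx hy hmargin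
    _ = α * π / ε + 1 := by field_simp
end
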